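/- arXiv:1809.04859 — 5 statements merged into one kernel-verified Lean document; each statement's English description precedes it below -/
import Mathlib

section
/- The sets Γ, Γ⁻¹ and R are closed subsets of X×X; the set of initial points 𝔞 and the set of final points 𝔟 are Borel subsets of X; and the transport set with end points 𝒯_e is σ-compact (a countable union of compact sets). -/
open Set MeasureTheory

variable {X : Type*}

/-- A geodesic parametrized on `[0,1]`. -/
def IsGeodesic [MetricSpace X] (γ : ℝ → X) : Prop :=
  ∀ s ∈ Set.Icc (0:ℝ) 1, ∀ t ∈ Set.Icc (0:ℝ) 1,
    dist (γ s) (γ t) = |s - t| * dist (γ 0) (γ 1)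

/-- `(X,d)` is a geodesic space. -/
def GeodesicSpace (X : Type*) [MetricSpace X] : Prop :=
  ∀ x y : X, ∃ γ : ℝ → X, IsGeodesic γ ∧ γ 0 = x ∧ γ 1 = y

/-- `Γ = {(x,y) : φ(x) - φ(y) = d(x,y)}`. -/
def Gamma [MetricSpace X] (φ : X → ℝ) : Set (X × X) :=
  {p | φ p.1 - φ p.2 = dist p.1 p.2}

/-- `Γ⁻¹`. -/
def GammaInv [MetricSpace X] (φ : X → ℝ) : Set (X × X) :=
  {p | (p.2, p.1) ∈ Gamma φ}

/-- The set of transport rays `R = Γ ∪ Γ⁻¹`. -/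
def Rays [MetricSpace X] (φ : X → ℝ) : Set (X × X) :=
  Gamma φ ∪ GammaInv φ

/-- `Γ(x)`. -/
def GammaOf [MetricSpace X] (φ : X → ℝ) (x : X) : Set X := {y | (x, y) ∈ Gamma φ}

/-- `Γ⁻¹(x)`. -/
def GammaInvOf [MetricSpace X] (φ : X → ℝ) (x : X) : Set X := {y | (x, y) ∈ GammaInv φ}

/-- `R(x) = Γ(x) ∪ Γ⁻¹(x)`. -/
def RayOf [MetricSpace X] (φ : X → ℝ) (x : X) : Set X := GammaOf φ x ∪ GammaInvOf φ x

/-- The transport set with end points `𝒯_e`. -/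
def Te [MetricSpace X] (φ : X → ℝ) : Set X :=
  (Prod.fst '' (Gamma φ \ {p : X × X | p.1 = p.2})) ∪
    (Prod.fst '' (GammaInv φ \ {p : X × X | p.1 = p.2}))

/-- The set of forward branching points `A₊`. -/
def Aplus [MetricSpace X] (φ : X → ℝ) : Set X :=
  {x | x ∈ Te φ ∧ ∃ z ∈ GammaOf φ x, ∃ w ∈ GammaOf φ x, (z, w) ∉ Rays φ}

/-- The set of backward branching points `A₋`. -/
def Aminus [MetricSpace X] (φ : X → ℝ) : Set X :=
  {x | x ∈ Te φ ∧ ∃ z ∈ GammaInvOf φ x, ∃ w ∈ GammaInvOf φ x, (z, w) ∉ Rays φ}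

/-- The transport set `𝒯 = 𝒯_e \ (A₊ ∪ A₋)`. -/
def Tset [MetricSpace X] (φ : X → ℝ) : Set X := Te φ \ (Aplus φ ∪ Aminus φ)

/-- The set of initial points `𝔞`. -/
def initialPoints [MetricSpace X] (φ : X → ℝ) : Set X :=
  {z | ¬ ∃ x : X, (x, z) ∈ Gamma φ ∧ 0 < dist x z}

/-- The set of final points `𝔟`. -/
def finalPoints [MetricSpace X] (φ : X → ℝ) : Set X :=
  {z | ¬ ∃ x : X, (z, x) ∈ Gamma φ ∧ 0 < dist x z}

/-!
`Γ` is the zero set of the continuous function `(x, y) ↦ φ x - φ y - d(x, y)`, hence closed, and so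
are its reflection `Γ⁻¹` and `R`. The complements of `𝔞` and `𝔟` and the two pieces of `𝒯_e` are
projections of `Γ` or `Γ⁻¹` minus the diagonal. Such a closed-minus-closed subset of the proper
space `X × X` is σ-compact, because open sets of a metric space are `F_σ`; hence so are its
projections, and σ-compact sets are Borel.
-/

section SigmaCompact

variable {Y : Type*} [TopologicalSpace Y]

lemma IsSigmaCompact.inter_isClosed {s t : Set Y} (hs : IsSigmaCompact s) (ht : IsClosed t) :
    IsSigmaCompact (s ∩ t) := by
  obtain ⟨K, hK, rfl⟩ := hs
  rw [iUnion_inter]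
  exact isSigmaCompact_iUnion _ fun n => ((hK n).inter_right ht).isSigmaCompact

lemma IsSigmaCompact.union {s t : Set Y} (hs : IsSigmaCompact s) (ht : IsSigmaCompact t) :
    IsSigmaCompact (s ∪ t) := by
  rw [union_eq_iUnion]
  exact isSigmaCompact_iUnion _ (Bool.forall_bool.2 ⟨ht, hs⟩)

lemma IsSigmaCompact.measurableSet [T2Space Y] [MeasurableSpace Y] [BorelSpace Y] {s : Set Y}
    (hs : IsSigmaCompact s) : MeasurableSet s := by
  obtain ⟨K, hK, rfl⟩ := hs
  exact .iUnion fun n => (hK n).measurableSet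

lemma IsOpen.isSigmaCompact [SigmaCompactSpace Y] [PerfectlyNormalSpace Y] {u : Set Y}
    (hu : IsOpen u) : IsSigmaCompact u := by
  obtain ⟨V, hV, hcompl⟩ := isGδ_iff_eq_iInter_nat.1 hu.isClosed_compl.isGδ
  rw [← compl_compl u, hcompl, compl_iInter]
  exact isSigmaCompact_iUnion _ fun n =>
    isSigmaCompact_univ.of_isClosed_subset (hV n).isClosed_compl (subset_univ _)

lemma IsClosed.isSigmaCompact_sdiff [SigmaCompactSpace Y] [PerfectlyNormalSpace Y] {s t : Set Y}
    (hs : IsClosed s) (ht : IsClosed t) : IsSigmaCompact (s \ t) := by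
  rw [sdiff_eq, inter_comm]
  exact ht.isOpen_compl.isSigmaCompact.inter_isClosed hs

end SigmaCompact

section TransportRays

variable [MetricSpace X] {φ : X → ℝ}

lemma isClosed_gamma (hφ : Continuous φ) : IsClosed (Gamma φ) :=
  isClosed_eq (hφ.comp continuous_fst |>.sub <| hφ.comp continuous_snd) continuous_dist

lemma isClosed_gammaInv (hφ : Continuous φ) : IsClosed (GammaInv φ) :=
  (isClosed_gamma hφ).preimage continuous_swap

variable (φ)

lemma compl_initialPoints : (initialPoints φ)ᶜ = Prod.snd '' (Gamma φ \ diagonal X) := by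
  ext z
  simp [initialPoints, Prod.exists, dist_pos]

lemma compl_finalPoints : (finalPoints φ)ᶜ = Prod.fst '' (Gamma φ \ diagonal X) := by
  ext z
  simp [finalPoints, Prod.exists, dist_pos, eq_comm]

end TransportRays

theorem stmt1_general [MetricSpace X] [MeasurableSpace X] [BorelSpace X]
    (hproper : ProperSpace X)
    (φ : X → ℝ) (hφ : LipschitzWith 1 φ) :
    IsClosed (Gamma φ) ∧ IsClosed (GammaInv φ) ∧ IsClosed (Rays φ) ∧
      MeasurableSet (initialPoints φ) ∧ MeasurableSet (finalPoints φ) ∧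
      IsSigmaCompact (Te φ) := by
  have hΓ := isClosed_gamma hφ.continuous
  have hΓinv := isClosed_gammaInv hφ.continuous
  have hΓσ : IsSigmaCompact (Gamma φ \ diagonal X) := hΓ.isSigmaCompact_sdiff isClosed_diagonal
  have hΓinvσ : IsSigmaCompact (GammaInv φ \ diagonal X) :=
    hΓinv.isSigmaCompact_sdiff isClosed_diagonal
  refine ⟨hΓ, hΓinv, hΓ.union hΓinv, ?_, ?_, ?_⟩
  · rw [← MeasurableSet.compl_iff, compl_initialPoints]
    exact (hΓσ.image continuous_snd).measurableSet
  · rw [← MeasurableSet.compl_iff, compl_finalPoints]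
    exact (hΓσ.image continuous_fst).measurableSet
  · exact (hΓσ.image continuous_fst).union (hΓinvσ.image continuous_fst)

theorem stmt1 [MetricSpace X] [MeasurableSpace X] [BorelSpace X]
    (hproper : ProperSpace X) (hgeod : GeodesicSpace X)
    (φ : X → ℝ) (hφ : LipschitzWith 1 φ) :
    IsClosed (Gamma φ) ∧ IsClosed (GammaInv φ) ∧ IsClosed (Rays φ) ∧
      MeasurableSet (initialPoints φ) ∧ MeasurableSet (finalPoints φ) ∧
      IsSigmaCompact (Te φ) :=
  stmt1_general hproper φ hφ
end

section
/- The set of transport rays R is an equivalence relation on 𝒯_e \ (A₊ ∪ A₋): (x,x) ∈ R for every x ∈ 𝒯_e; (x,y) ∈ R implies (y,x) ∈ R; and for all x,z,w ∈ 𝒯_e \ (A₊ ∪ A₋), if (x,z) ∈ R and (z,w) ∈ R then (x,w) ∈ R. -/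
open Set MeasureTheory

variable {X : Type*}

/-
Γ is transitive: the triangle inequality through the middle point becomes an equality since φ is
1-Lipschitz. In the two mixed cases the outer points both lie on rays leaving (or both on rays
entering) the middle point z, and that such points are joined by a ray is precisely what `z ∉ A₊`
(or `z ∉ A₋`) says.
-/

section TransportRays

variable [MetricSpace X] {φ : X → ℝ}

lemma mem_Gamma_self (x : X) : (x, x) ∈ Gamma φ := by
  simp [Gamma]

lemma swap_mem_Rays {x y : X} (h : (x, y) ∈ Rays φ) : (y, x) ∈ Rays φ :=
  h.symm

lemma Gamma_trans (hφ : LipschitzWith 1 φ) {a b c : X}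
    (hab : (a, b) ∈ Gamma φ) (hbc : (b, c) ∈ Gamma φ) : (a, c) ∈ Gamma φ := by
  simp only [Gamma, Set.mem_ofPred_eq] at *
  have hle : φ a - φ c ≤ dist a c := by
    have := hφ.dist_le_mul a c
    rw [NNReal.coe_one, one_mul, Real.dist_eq] at this
    exact (le_abs_self _).trans this
  have hge : dist a c ≤ φ a - φ c :=
    calc dist a c ≤ dist a b + dist b c := dist_triangle a b c
      _ = φ a - φ c := by rw [← hab, ← hbc]; ring
  exact le_antisymm hle hge

lemma mem_Rays_of_mem_GammaOf_of_notMem_Aplus {x z w : X} (hz : z ∈ Te φ)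
    (hzA : z ∉ Aplus φ) (hx : x ∈ GammaOf φ z) (hw : w ∈ GammaOf φ z) : (x, w) ∈ Rays φ := by
  by_contra h
  exact hzA ⟨hz, x, hx, w, hw, h⟩

lemma mem_Rays_of_mem_GammaInvOf_of_notMem_Aminus {x z w : X} (hz : z ∈ Te φ)
    (hzA : z ∉ Aminus φ) (hx : x ∈ GammaInvOf φ z) (hw : w ∈ GammaInvOf φ z) :
    (x, w) ∈ Rays φ := by
  by_contra h
  exact hzA ⟨hz, x, hx, w, hw, h⟩

lemma Rays_trans_of_mem_Tset (hφ : LipschitzWith 1 φ) {x z w : X} (hz : z ∈ Tset φ)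
    (hxz : (x, z) ∈ Rays φ) (hzw : (z, w) ∈ Rays φ) : (x, w) ∈ Rays φ := by
  obtain ⟨hzTe, hzA⟩ := hz
  rw [Set.mem_union, not_or] at hzA
  rcases hxz with hxz | hzx <;> rcases hzw with hzw | hwz
  · exact Or.inl (Gamma_trans hφ hxz hzw)
  · exact mem_Rays_of_mem_GammaInvOf_of_notMem_Aminus hzTe hzA.2 hxz hwz
  · exact mem_Rays_of_mem_GammaOf_of_notMem_Aplus hzTe hzA.1 hzx hzw
  · exact Or.inr (Gamma_trans hφ hwz hzx)

end TransportRays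

theorem stmt3_general [MetricSpace X]
    (φ : X → ℝ) (hφ : LipschitzWith 1 φ) :
    (∀ x ∈ Te φ, (x, x) ∈ Rays φ) ∧
    (∀ x y : X, (x, y) ∈ Rays φ → (y, x) ∈ Rays φ) ∧
    (∀ x ∈ Te φ \ (Aplus φ ∪ Aminus φ), ∀ z ∈ Te φ \ (Aplus φ ∪ Aminus φ),
      ∀ w ∈ Te φ \ (Aplus φ ∪ Aminus φ),
        (x, z) ∈ Rays φ → (z, w) ∈ Rays φ → (x, w) ∈ Rays φ) :=
  ⟨fun x _ => Or.inl (mem_Gamma_self x), fun _ _ => swap_mem_Rays,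
    fun _ _ _ hz _ _ => Rays_trans_of_mem_Tset hφ hz⟩

theorem stmt3 [MetricSpace X]
    (hproper : ProperSpace X) (hgeod : GeodesicSpace X)
    (φ : X → ℝ) (hφ : LipschitzWith 1 φ) :
    (∀ x ∈ Te φ, (x, x) ∈ Rays φ) ∧
    (∀ x y : X, (x, y) ∈ Rays φ → (y, x) ∈ Rays φ) ∧
    (∀ x ∈ Te φ \ (Aplus φ ∪ Aminus φ), ∀ z ∈ Te φ \ (Aplus φ ∪ Aminus φ),
      ∀ w ∈ Te φ \ (Aplus φ ∪ Aminus φ),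
        (x, z) ∈ Rays φ → (z, w) ∈ Rays φ → (x, w) ∈ Rays φ) :=
  stmt3_general φ hφ
end

section
/- For any x ∈ 𝒯 and any z,w ∈ R(x), there exists a geodesic γ ∈ G such that {x,z,w} ⊂ {γ_s : s ∈ [0,1]}. Moreover, if γ̂ ∈ G also satisfies {x,z,w} ⊂ {γ̂_s : s ∈ [0,1]}, then there exists γ̃ ∈ G with ({γ̂_s : s ∈ [0,1]} ∪ {γ_s : s ∈ [0,1]}) ⊂ {γ̃_s : s ∈ [0,1]}. -/
open Set MeasureTheory

variable {X : Type*}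

/-!
For `x ∈ 𝒯` any two points of `R(x)` are joined by `Γ` or `Γ⁻¹` (the two cases with one point on
each side of `x` follow from transitivity of `Γ`, the others from the absence of branching at `x`),
so `d(p, q) = |φ p - φ q|` on `R(x)`: `φ` embeds `R(x)` isometrically into `ℝ`. Along a geodesic
with endpoints in `Γ`, `φ` is affine, and every point of such a geodesic through `x` lies in `R(x)`.
Hence the union of two such geodesics through `x` is mapped by `φ` onto the union of two
overlapping intervals, again an interval, and inverting `φ` on that interval parametrizes a single
geodesic containing both.
-/

section TransportRays

variable [MetricSpace X] {φ : X → ℝ}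

lemma mem_gamma_iff {p q : X} : (p, q) ∈ Gamma φ ↔ φ p - φ q = dist p q := Iff.rfl

lemma sub_le_dist_of_lipschitzWith_one (hφ : LipschitzWith 1 φ) (p q : X) :
    φ p - φ q ≤ dist p q := by
  simpa [Real.dist_eq] using (le_abs_self _).trans (hφ.dist_le_mul p q)

lemma mem_gamma_trans (hφ : LipschitzWith 1 φ) {p q r : X}
    (hpq : (p, q) ∈ Gamma φ) (hqr : (q, r) ∈ Gamma φ) : (p, r) ∈ Gamma φ := by
  rw [mem_gamma_iff] at *
  linarith [sub_le_dist_of_lipschitzWith_one hφ p r, dist_triangle p q r]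

lemma dist_eq_abs_of_mem_rays {p q : X} (h : (p, q) ∈ Rays φ) : dist p q = |φ p - φ q| := by
  rcases h with h | h
  · rw [mem_gamma_iff.mp h, abs_of_nonneg dist_nonneg]
  · have h : φ q - φ p = dist q p := h
    rw [abs_sub_comm, h, dist_comm, abs_of_nonneg dist_nonneg]

lemma mem_rays_of_mem_rayOf (hφ : LipschitzWith 1 φ) {x p q : X} (hx : x ∈ Tset φ)
    (hp : p ∈ RayOf φ x) (hq : q ∈ RayOf φ x) : (p, q) ∈ Rays φ := by
  obtain ⟨hxe, hxb⟩ := hx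
  rcases hp with hp | hp <;> rcases hq with hq | hq
  · by_contra hpq; exact hxb (Or.inl ⟨hxe, p, hp, q, hq, hpq⟩)
  · exact Or.inr (mem_gamma_trans hφ hq hp)
  · exact Or.inl (mem_gamma_trans hφ hp hq)
  · by_contra hpq; exact hxb (Or.inr ⟨hxe, p, hp, q, hq, hpq⟩)

lemma exists_geodesic_of_mem_rays (hgeod : GeodesicSpace X) {p q : X} (h : (p, q) ∈ Rays φ) :
    ∃ γ : ℝ → X, IsGeodesic γ ∧ (γ 0, γ 1) ∈ Gamma φ ∧
      p ∈ γ '' Icc 0 1 ∧ q ∈ γ '' Icc 0 1 := by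
  rcases h with h | h
  · obtain ⟨γ, hγ, rfl, rfl⟩ := hgeod p q
    exact ⟨γ, hγ, h, ⟨0, unitInterval.zero_mem, rfl⟩, ⟨1, unitInterval.one_mem, rfl⟩⟩
  · obtain ⟨γ, hγ, rfl, rfl⟩ := hgeod q p
    exact ⟨γ, hγ, h, ⟨1, unitInterval.one_mem, rfl⟩, ⟨0, unitInterval.zero_mem, rfl⟩⟩

end TransportRays

namespace IsGeodesic

variable [MetricSpace X] {φ : X → ℝ} {γ : ℝ → X}

lemma dist_of_le (hγ : IsGeodesic γ) {s t : ℝ} (hs : s ∈ Icc (0 : ℝ) 1)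
    (ht : t ∈ Icc (0 : ℝ) 1) (hst : s ≤ t) : dist (γ s) (γ t) = (t - s) * dist (γ 0) (γ 1) := by
  rw [hγ s hs t ht, abs_sub_comm, abs_of_nonneg (sub_nonneg.2 hst)]

-- The Lipschitz bounds on `[0, t]` and `[t, 1]` add up to the equality `he`, so both are sharp.
lemma phi_apply (hγ : IsGeodesic γ) (hφ : LipschitzWith 1 φ) (he : (γ 0, γ 1) ∈ Gamma φ)
    {t : ℝ} (ht : t ∈ Icc (0 : ℝ) 1) : φ (γ t) = φ (γ 0) + t * (φ (γ 1) - φ (γ 0)) := by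
  have hfirst := sub_le_dist_of_lipschitzWith_one hφ (γ 0) (γ t)
  have hsecond := sub_le_dist_of_lipschitzWith_one hφ (γ t) (γ 1)
  rw [hγ.dist_of_le unitInterval.zero_mem ht ht.1] at hfirst
  rw [hγ.dist_of_le ht unitInterval.one_mem ht.2] at hsecond
  rw [mem_gamma_iff] at he
  rw [show φ (γ 1) - φ (γ 0) = -dist (γ 0) (γ 1) by linarith]
  linarith

lemma mem_gamma (hγ : IsGeodesic γ) (hφ : LipschitzWith 1 φ) (he : (γ 0, γ 1) ∈ Gamma φ)
    {s t : ℝ} (hs : s ∈ Icc (0 : ℝ) 1) (ht : t ∈ Icc (0 : ℝ) 1) (hst : s ≤ t) :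
    (γ s, γ t) ∈ Gamma φ := by
  rw [mem_gamma_iff, hγ.dist_of_le hs ht hst, hγ.phi_apply hφ he hs, hγ.phi_apply hφ he ht,
    ← mem_gamma_iff.mp he]
  ring

lemma image_phi_image (hγ : IsGeodesic γ) (hφ : LipschitzWith 1 φ)
    (he : (γ 0, γ 1) ∈ Gamma φ) : φ '' (γ '' Icc 0 1) = Icc (φ (γ 1)) (φ (γ 0)) := by
  have hle : φ (γ 1) ≤ φ (γ 0) := by
    linarith [mem_gamma_iff.mp he, dist_nonneg (x := γ 0) (y := γ 1)]
  rw [← segment_eq_Icc hle, segment_symm, segment_eq_image', image_image]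
  exact image_congr fun t ht => hγ.phi_apply hφ he ht

lemma mem_rayOf (hγ : IsGeodesic γ) (hφ : LipschitzWith 1 φ) (he : (γ 0, γ 1) ∈ Gamma φ)
    {x p : X} (hx : x ∈ γ '' Icc 0 1) (hp : p ∈ γ '' Icc 0 1) : p ∈ RayOf φ x := by
  obtain ⟨s, hs, rfl⟩ := hx
  obtain ⟨t, ht, rfl⟩ := hp
  rcases le_total s t with hst | hts
  · exact Or.inl (hγ.mem_gamma hφ he hs ht hst)
  · exact Or.inr (hγ.mem_gamma hφ he ht hs hts)

end IsGeodesic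

section Gluing

variable [MetricSpace X] {φ : X → ℝ}

lemma exists_geodesic_of_dist_eq_abs {S : Set X} {C A : ℝ} (hCA : C ≤ A)
    (hS : ∀ p ∈ S, ∀ q ∈ S, dist p q = |φ p - φ q|) (himage : φ '' S = Icc C A) :
    ∃ γ : ℝ → X, IsGeodesic γ ∧ (γ 0, γ 1) ∈ Gamma φ ∧ S ⊆ γ '' Icc 0 1 := by
  have hparam : (fun t : ℝ => A + t * (C - A)) '' Icc 0 1 = φ '' S := by
    rw [himage, ← segment_eq_Icc hCA, segment_symm, segment_eq_image']
    rfl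
  obtain ⟨p₀, -⟩ : S.Nonempty := image_nonempty.1 (himage ▸ nonempty_Icc.2 hCA)
  have : Nonempty X := ⟨p₀⟩
  set γ : ℝ → X := fun t => Function.invFunOn φ S (A + t * (C - A))
  have hγ : ∀ t ∈ Icc (0 : ℝ) 1, γ t ∈ S ∧ φ (γ t) = A + t * (C - A) := fun t ht =>
    Function.invFunOn_pos (hparam ▸ ⟨t, ht, rfl⟩ : A + t * (C - A) ∈ φ '' S)
  have hdist : ∀ s ∈ Icc (0 : ℝ) 1, ∀ t ∈ Icc (0 : ℝ) 1,
      dist (γ s) (γ t) = |s - t| * (A - C) := by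
    intro s hs t ht
    rw [hS _ (hγ s hs).1 _ (hγ t ht).1, (hγ s hs).2, (hγ t ht).2,
      show A + s * (C - A) - (A + t * (C - A)) = -((s - t) * (A - C)) by ring,
      abs_neg, abs_mul, abs_of_nonneg (sub_nonneg.2 hCA)]
  have hlength : dist (γ 0) (γ 1) = A - C := by
    simpa using hdist 0 unitInterval.zero_mem 1 unitInterval.one_mem
  refine ⟨γ, fun s hs t ht => hlength ▸ hdist s hs t ht, ?_, ?_⟩
  · rw [mem_gamma_iff, hlength, (hγ 0 unitInterval.zero_mem).2,
      (hγ 1 unitInterval.one_mem).2]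
    ring
  · intro p hp
    obtain ⟨t, ht, hpt : A + t * (C - A) = φ p⟩ := hparam ▸ mem_image_of_mem φ hp
    refine ⟨t, ht, dist_eq_zero.1 ?_⟩
    rw [hS _ (hγ t ht).1 _ hp, (hγ t ht).2, hpt, sub_self, abs_zero]

lemma exists_geodesic_union_subset (hφ : LipschitzWith 1 φ) {x : X} (hx : x ∈ Tset φ)
    {γ γ' : ℝ → X} (hγ : IsGeodesic γ) (hγ' : IsGeodesic γ')
    (he : (γ 0, γ 1) ∈ Gamma φ) (he' : (γ' 0, γ' 1) ∈ Gamma φ)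
    (hxγ : x ∈ γ '' Icc 0 1) (hxγ' : x ∈ γ' '' Icc 0 1) :
    ∃ γ'' : ℝ → X, IsGeodesic γ'' ∧ (γ'' 0, γ'' 1) ∈ Gamma φ ∧
      γ '' Icc 0 1 ∪ γ' '' Icc 0 1 ⊆ γ'' '' Icc 0 1 := by
  have hray : γ '' Icc 0 1 ∪ γ' '' Icc 0 1 ⊆ RayOf φ x :=
    union_subset (fun _ hp => hγ.mem_rayOf hφ he hxγ hp) (fun _ hp => hγ'.mem_rayOf hφ he' hxγ' hp)
  have hφx : φ x ∈ Icc (φ (γ 1)) (φ (γ 0)) := hγ.image_phi_image hφ he ▸ mem_image_of_mem φ hxγ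
  have hφx' : φ x ∈ Icc (φ (γ' 1)) (φ (γ' 0)) :=
    hγ'.image_phi_image hφ he' ▸ mem_image_of_mem φ hxγ'
  have himage : φ '' (γ '' Icc 0 1 ∪ γ' '' Icc 0 1) =
      Icc (min (φ (γ 1)) (φ (γ' 1))) (max (φ (γ 0)) (φ (γ' 0))) := by
    rw [image_union, hγ.image_phi_image hφ he, hγ'.image_phi_image hφ he',
      Icc_union_Icc' (hφx'.1.trans hφx.2) (hφx.1.trans hφx'.2)]
  exact exists_geodesic_of_dist_eq_abs
    ((min_le_left _ _).trans (hφx.1.trans (hφx.2.trans (le_max_left _ _))))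
    (fun p hp q hq => dist_eq_abs_of_mem_rays (mem_rays_of_mem_rayOf hφ hx (hray hp) (hray hq)))
    himage

end Gluing

theorem stmt4_general [MetricSpace X]
    (hgeod : GeodesicSpace X)
    (φ : X → ℝ) (hφ : LipschitzWith 1 φ)
    (x : X) (hx : x ∈ Tset φ)
    (z w : X) (hz : z ∈ RayOf φ x) (hw : w ∈ RayOf φ x) :
    ∃ γ : ℝ → X, IsGeodesic γ ∧ (γ 0, γ 1) ∈ Gamma φ ∧
      ({x, z, w} : Set X) ⊆ γ '' Set.Icc 0 1 ∧
      ∀ γ' : ℝ → X, IsGeodesic γ' → (γ' 0, γ' 1) ∈ Gamma φ →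
        ({x, z, w} : Set X) ⊆ γ' '' Set.Icc 0 1 →
        ∃ γ'' : ℝ → X, IsGeodesic γ'' ∧ (γ'' 0, γ'' 1) ∈ Gamma φ ∧
          γ '' Set.Icc 0 1 ∪ γ' '' Set.Icc 0 1 ⊆ γ'' '' Set.Icc 0 1 := by
  obtain ⟨σ, hσ, hσe, hxσ, hzσ⟩ := exists_geodesic_of_mem_rays hgeod hz
  obtain ⟨τ, hτ, hτe, hxτ, hwτ⟩ := exists_geodesic_of_mem_rays hgeod hw
  obtain ⟨γ, hγ, hγe, hστ⟩ := exists_geodesic_union_subset hφ hx hσ hτ hσe hτe hxσ hxτ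
  have hxzw : ({x, z, w} : Set X) ⊆ γ '' Icc 0 1 := by
    rintro p (rfl | rfl | rfl)
    exacts [hστ (Or.inl hxσ), hστ (Or.inl hzσ), hστ (Or.inr hwτ)]
  refine ⟨γ, hγ, hγe, hxzw, fun γ' hγ' hγ'e hxzw' => ?_⟩
  exact exists_geodesic_union_subset hφ hx hγ hγ' hγe hγ'e (hxzw (mem_insert x _))
    (hxzw' (mem_insert x _))

theorem stmt4 [MetricSpace X]
    (hproper : ProperSpace X) (hgeod : GeodesicSpace X)
    (φ : X → ℝ) (hφ : LipschitzWith 1 φ)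
    (x : X) (hx : x ∈ Tset φ)
    (z w : X) (hz : z ∈ RayOf φ x) (hw : w ∈ RayOf φ x) :
    ∃ γ : ℝ → X, IsGeodesic γ ∧ (γ 0, γ 1) ∈ Gamma φ ∧
      ({x, z, w} : Set X) ⊆ γ '' Set.Icc 0 1 ∧
      ∀ γ' : ℝ → X, IsGeodesic γ' → (γ' 0, γ' 1) ∈ Gamma φ →
        ({x, z, w} : Set X) ⊆ γ' '' Set.Icc 0 1 →
        ∃ γ'' : ℝ → X, IsGeodesic γ'' ∧ (γ'' 0, γ'' 1) ∈ Gamma φ ∧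
          γ '' Set.Icc 0 1 ∪ γ' '' Set.Icc 0 1 ⊆ γ'' '' Set.Icc 0 1 :=
  stmt4_general hgeod φ hφ x hx z w hz hw
end

section
/- Let Δ ⊂ Γ be any set such that for all (x₀,y₀),(x₁,y₁) ∈ Δ it holds (φ(y₁) − φ(y₀))·(φ(x₁) − φ(x₀)) ≥ 0. Then Δ is d²-cyclically monotone. -/
open Set MeasureTheory

variable {X : Type*}

/-- `d²`-cyclical monotonicity. -/
def CyclMono2 [MetricSpace X] (Λ : Set (X × X)) : Prop :=
  ∀ (n : ℕ) (p : Fin (n + 1) → X × X), (∀ i, p i ∈ Λ) →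
    ∑ i, dist (p i).1 (p i).2 ^ 2 ≤ ∑ i, dist (p i).1 (p (i + 1)).2 ^ 2

/-!
On `Γ` the cost is read off the potential, `d(xᵢ, yᵢ) = φ(xᵢ) - φ(yᵢ)`, while for the shifted
pairs the Lipschitz bound gives `d(xᵢ, yᵢ₊₁) ≥ |φ(xᵢ) - φ(yᵢ₊₁)|`. So it suffices to prove the
inequality for the real numbers `aᵢ = φ(xᵢ)`, `bᵢ = φ(yᵢ)` with cost `(a - b)²`. The hypothesis on
`Δ` says that `a` and `b` monovary, and then expanding the squares reduces the claim to the
rearrangement inequality `∑ aᵢ bᵢ₊₁ ≤ ∑ aᵢ bᵢ`.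
-/

open Finset

theorem Monovary.sum_sub_sq_le_sum_sub_comp_perm_sq {ι α : Type*} [Fintype ι] [CommRing α]
    [LinearOrder α] [IsStrictOrderedRing α] {f g : ι → α} (hfg : Monovary f g)
    (σ : Equiv.Perm ι) :
    ∑ i, (f i - g i) ^ 2 ≤ ∑ i, (f i - g (σ i)) ^ 2 := by
  have expand : ∀ h : ι → α,
      ∑ i, (f i - h i) ^ 2 = ∑ i, f i ^ 2 - 2 * ∑ i, f i * h i + ∑ i, h i ^ 2 := by
    intro h
    simp only [sub_sq, sum_add_distrib, sum_sub_distrib, mul_sum, mul_assoc]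
  have hsq : ∑ i, g (σ i) ^ 2 = ∑ i, g i ^ 2 := Equiv.sum_comp σ (fun i => g i ^ 2)
  rw [expand g, expand (fun i => g (σ i)), hsq]
  linarith [hfg.sum_mul_comp_perm_le_sum_mul (σ := σ)]

theorem LipschitzWith.sub_sq_le_dist_sq [PseudoMetricSpace X] {φ : X → ℝ}
    (hφ : LipschitzWith 1 φ) (x y : X) :
    (φ x - φ y) ^ 2 ≤ dist x y ^ 2 := by
  have h := hφ.dist_le_mul x y
  rw [Real.dist_eq, NNReal.coe_one, one_mul] at h
  simpa only [sq_abs] using pow_le_pow_left₀ (abs_nonneg _) h 2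

theorem monovary_potential_fst_snd {ι : Type*} {φ : X → ℝ} {Δ : Set (X × X)}
    (hmono : ∀ p ∈ Δ, ∀ q ∈ Δ, 0 ≤ (φ q.2 - φ p.2) * (φ q.1 - φ p.1))
    {p : ι → X × X} (hp : ∀ i, p i ∈ Δ) :
    Monovary (fun i => φ (p i).1) (fun i => φ (p i).2) := by
  intro i j hlt
  have := hmono _ (hp i) _ (hp j)
  nlinarith

theorem stmt5 [MetricSpace X]
    (φ : X → ℝ) (hφ : LipschitzWith 1 φ)
    (Δ : Set (X × X)) (hΔ : Δ ⊆ Gamma φ)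
    (hmono : ∀ p ∈ Δ, ∀ q ∈ Δ, 0 ≤ (φ q.2 - φ p.2) * (φ q.1 - φ p.1)) :
    CyclMono2 Δ := by
  intro n p hp
  have hdist : ∀ i, dist (p i).1 (p i).2 = φ (p i).1 - φ (p i).2 := fun i => (hΔ (hp i)).symm
  calc ∑ i, dist (p i).1 (p i).2 ^ 2 = ∑ i, (φ (p i).1 - φ (p i).2) ^ 2 := by
        simp only [hdist]
    _ ≤ ∑ i, (φ (p i).1 - φ (p (i + 1)).2) ^ 2 :=
        (monovary_potential_fst_snd hmono hp).sum_sub_sq_le_sum_sub_comp_perm_sq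
          (Equiv.addRight 1)
    _ ≤ ∑ i, dist (p i).1 (p (i + 1)).2 ^ 2 :=
        sum_le_sum fun i _ => hφ.sub_sq_le_dist_sq _ _
end

section
/- Assume that for all Borel probability measures μ₀, μ₁ on X with finite second moment and with μ₀ absolutely continuous with respect to m, every coupling π of (μ₀,μ₁) minimizing ∫ d(x,y)² π(dx dy) among all couplings of (μ₀,μ₁) is concentrated on the graph of a Borel map T : X → X (i.e. π({(x,T(x)) : x ∈ X}) = 1). Then m(A₊) = m(A₋) = 0. -/
set_option linter.unusedSectionVars false
set_option maxHeartbeats 1000000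


open Set MeasureTheory

variable {X : Type*}

section Geo
variable [MetricSpace X]

/-- The compact "branching configuration" set. -/
def Fset (φ : X → ℝ) (x₀ : X) (t δ R : ℝ) : Set (X × X × X) :=
  {q | dist q.1 x₀ ≤ R ∧ φ q.1 - φ q.2.1 = t ∧ dist q.1 q.2.1 = t ∧
       φ q.1 - φ q.2.2 = t ∧ dist q.1 q.2.2 = t ∧ δ ≤ dist q.2.1 q.2.2}

def Bset (φ : X → ℝ) (x₀ : X) (t δ : ℚ) (R : ℕ) : Set X :=
  {x | 0 < t ∧ 0 < δ ∧ x ∈ Prod.fst '' Fset φ x₀ (t : ℝ) (δ : ℝ) (R : ℝ)}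

lemma lip_sub_le {φ : X → ℝ} (hφ : LipschitzWith 1 φ) (a b : X) : φ a - φ b ≤ dist a b := by
  have h := hφ.dist_le_mul a b
  rw [Real.dist_eq] at h
  have h1 : |φ a - φ b| ≤ dist a b := by simpa using h
  exact (abs_le.1 h1).2

lemma geodesic_point {φ : X → ℝ} (hφ : LipschitzWith 1 φ) {x z : X} {γ : ℝ → X}
    (hγ : IsGeodesic γ) (h0 : γ 0 = x) (h1 : γ 1 = z) (hz : φ x - φ z = dist x z)
    {s : ℝ} (hs : s ∈ Set.Icc (0:ℝ) 1) :
    dist x (γ s) = s * dist x z ∧ φ x - φ (γ s) = s * dist x z := by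
  have hd1 : dist x (γ s) = s * dist x z := by
    have h := hγ 0 ⟨le_rfl, zero_le_one⟩ s hs
    rw [h0, h1] at h
    rwa [zero_sub, abs_neg, abs_of_nonneg hs.1] at h
  have hd2 : dist (γ s) z = (1 - s) * dist x z := by
    have h := hγ s hs 1 ⟨zero_le_one, le_rfl⟩
    rw [h0, h1] at h
    rwa [abs_of_nonpos (by linarith [hs.2] : s - 1 ≤ 0), neg_sub] at h
  refine ⟨hd1, le_antisymm ?_ ?_⟩
  · calc φ x - φ (γ s) ≤ dist x (γ s) := lip_sub_le hφ _ _
    _ = s * dist x z := hd1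
  · have h3 : φ (γ s) - φ z ≤ (1 - s) * dist x z := by
      calc φ (γ s) - φ z ≤ dist (γ s) z := lip_sub_le hφ _ _
      _ = (1 - s) * dist x z := hd2
    linarith

lemma aplus_covering (hgeod : GeodesicSpace X) {φ : X → ℝ} (hφ : LipschitzWith 1 φ) (x₀ : X) :
    Aplus φ ⊆ ⋃ (t : ℚ) (δ : ℚ) (R : ℕ), Bset φ x₀ t δ R := by
  rintro x ⟨-, z, hz, w, hw, hzw⟩
  have hz' : φ x - φ z = dist x z := hz
  have hw' : φ x - φ w = dist x w := hw
  -- z ≠ x and w ≠ x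
  have hdz : 0 < dist x z := by
    rcases eq_or_ne z x with rfl | h
    · exact absurd (Or.inl (by simpa [Gamma, dist_comm] using hw') : (z, w) ∈ Rays φ) hzw
    · exact dist_pos.2 (Ne.symm h)
  have hdw : 0 < dist x w := by
    rcases eq_or_ne w x with rfl | h
    · exact absurd (Or.inr (by simpa [GammaInv, Gamma, dist_comm] using hz') : (z, w) ∈ Rays φ) hzw
    · exact dist_pos.2 (Ne.symm h)
  obtain ⟨γ, hγ, hγ0, hγ1⟩ := hgeod x z
  obtain ⟨γ', hγ', hγ'0, hγ'1⟩ := hgeod x w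
  set dz := dist x z with hdz_def
  set dw := dist x w with hdw_def
  set η : ℝ → X := fun t => γ (t / dz) with hη
  set η' : ℝ → X := fun t => γ' (t / dw) with hη'
  have hmem : ∀ t, 0 ≤ t → t ≤ dz → dist x (η t) = t ∧ φ x - φ (η t) = t := by
    intro t h0 h1
    have hs : t / dz ∈ Set.Icc (0:ℝ) 1 :=
      ⟨div_nonneg h0 hdz.le, (div_le_one hdz).2 h1⟩
    have := geodesic_point hφ hγ hγ0 hγ1 hz' hs
    rwa [div_mul_cancel₀ _ hdz.ne'] at this
  have hmem' : ∀ t, 0 ≤ t → t ≤ dw → dist x (η' t) = t ∧ φ x - φ (η' t) = t := by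
    intro t h0 h1
    have hs : t / dw ∈ Set.Icc (0:ℝ) 1 :=
      ⟨div_nonneg h0 hdw.le, (div_le_one hdw).2 h1⟩
    have := geodesic_point hφ hγ' hγ'0 hγ'1 hw' hs
    rwa [div_mul_cancel₀ _ hdw.ne'] at this
  set tm := min dz dw with htm
  have htm0 : 0 < tm := lt_min hdz hdw
  -- distances along each geodesic
  have hηd : ∀ a b : ℝ, 0 ≤ a → a ≤ dz → 0 ≤ b → b ≤ dz → dist (η a) (η b) = |a - b| := by
    intro a b ha0 ha1 hb0 hb1
    have h01 : dist (γ 0) (γ 1) = dz := by rw [hγ0, hγ1]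
    have := hγ (a / dz) ⟨div_nonneg ha0 hdz.le, (div_le_one hdz).2 ha1⟩
      (b / dz) ⟨div_nonneg hb0 hdz.le, (div_le_one hdz).2 hb1⟩
    rw [h01, div_sub_div_same, abs_div, abs_of_pos hdz, div_mul_cancel₀ _ hdz.ne'] at this
    exact this
  have hη'd : ∀ a b : ℝ, 0 ≤ a → a ≤ dw → 0 ≤ b → b ≤ dw → dist (η' a) (η' b) = |a - b| := by
    intro a b ha0 ha1 hb0 hb1
    have h01 : dist (γ' 0) (γ' 1) = dw := by rw [hγ'0, hγ'1]
    have := hγ' (a / dw) ⟨div_nonneg ha0 hdw.le, (div_le_one hdw).2 ha1⟩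
      (b / dw) ⟨div_nonneg hb0 hdw.le, (div_le_one hdw).2 hb1⟩
    rw [h01, div_sub_div_same, abs_div, abs_of_pos hdw, div_mul_cancel₀ _ hdw.ne'] at this
    exact this
  -- find a rational t with η t ≠ η' t
  have hkey : ∃ t : ℚ, 0 < (t:ℝ) ∧ (t:ℝ) ≤ tm ∧ η t ≠ η' t := by
    by_contra hcon
    push_neg at hcon
    -- then η tm = η' tm
    have heq : η tm = η' tm := by
      by_contra hne
      have hpos : 0 < dist (η tm) (η' tm) := dist_pos.2 hne
      obtain ⟨q, hq1, hq2⟩ := exists_rat_btwn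
        (show max 0 (tm - dist (η tm) (η' tm) / 2) < tm by
          rcases max_cases 0 (tm - dist (η tm) (η' tm) / 2) with ⟨h, _⟩ | ⟨h, _⟩ <;> rw [h] <;>
            linarith)
      have hq0 : 0 < (q:ℝ) := lt_of_le_of_lt (le_max_left _ _) hq1
      have hqtm : (q:ℝ) ≤ tm := hq2.le
      have hqd : tm - dist (η tm) (η' tm) / 2 < q := lt_of_le_of_lt (le_max_right _ _) hq1
      have heqq : η q = η' q := hcon q hq0 hqtm
      have d1 : dist (η tm) (η q) = tm - q := by
        rw [hηd tm q htm0.le (min_le_left _ _) hq0.le (hqtm.trans (min_le_left _ _))]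
        rw [abs_of_nonneg (by linarith)]
      have d2 : dist (η' q) (η' tm) = tm - q := by
        rw [hη'd q tm hq0.le (hqtm.trans (min_le_right _ _)) htm0.le (min_le_right _ _)]
        rw [abs_of_nonpos (by linarith), neg_sub]
      have : dist (η tm) (η' tm) ≤ (tm - q) + (tm - q) := by
        calc dist (η tm) (η' tm) ≤ dist (η tm) (η q) + dist (η q) (η' tm) := dist_triangle _ _ _
        _ = (tm - q) + dist (η' q) (η' tm) := by rw [d1, heqq]
        _ = (tm - q) + (tm - q) := by rw [d2]
      linarith
    -- derive (z,w) ∈ Rays φ, contradiction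
    rcases min_cases dz dw with ⟨hmin, hle⟩ | ⟨hmin, hle⟩
    · -- tm = dz ≤ dw : z lies on the geodesic to w
      have hzeq : η dz = z := by rw [hη]; simp only [div_self hdz.ne']; rw [hγ1]
      have htmz : tm = dz := by rw [htm, hmin]
      have heq' : η dz = η' dz := by rw [← htmz]; exact heq
      have hz_on : z = η' dz := by rw [← hzeq]; exact heq'
      have hd : dist z w = dw - dz := by
        have h1 : dist (η' dz) (η' dw) = |dz - dw| :=
          hη'd dz dw hdz.le hle hdw.le le_rfl
        have h2 : η' dw = w := by rw [hη']; simp only [div_self hdw.ne']; rw [hγ'1]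
        rw [← hz_on, h2] at h1
        rwa [abs_of_nonpos (by linarith), neg_sub] at h1
      refine hzw (Or.inl ?_)
      show φ z - φ w = dist z w
      rw [hd]; linarith
    · -- tm = dw ≤ dz : w lies on the geodesic to z
      have hweq : η' dw = w := by rw [hη']; simp only [div_self hdw.ne']; rw [hγ'1]
      have htmw : tm = dw := by rw [htm, hmin]
      have heq' : η dw = η' dw := by rw [← htmw]; exact heq
      have hw_on : w = η dw := by rw [← hweq]; exact heq'.symm
      have hd : dist w z = dz - dw := by
        have h1 : dist (η dw) (η dz) = |dw - dz| :=
          hηd dw dz hdw.le hle.le hdz.le le_rfl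
        have h2 : η dz = z := by rw [hη]; simp only [div_self hdz.ne']; rw [hγ1]
        rw [← hw_on, h2] at h1
        rwa [abs_of_nonpos (by linarith), neg_sub] at h1
      refine hzw (Or.inr ?_)
      show φ w - φ z = dist w z
      rw [hd]; linarith
  obtain ⟨t, ht0, httm, htne⟩ := hkey
  have hy := hmem t ht0.le (httm.trans (min_le_left _ _))
  have hy' := hmem' t ht0.le (httm.trans (min_le_right _ _))
  have hδpos : 0 < dist (η t) (η' t) := dist_pos.2 htne
  obtain ⟨δ, hδ1, hδ2⟩ := exists_rat_btwn hδpos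
  have hδ0 : 0 < δ := by exact_mod_cast hδ1
  refine Set.mem_iUnion.2 ⟨t, Set.mem_iUnion.2 ⟨δ, Set.mem_iUnion.2 ⟨⌈dist x x₀⌉₊, ?_⟩⟩⟩
  refine ⟨by exact_mod_cast ht0, hδ0, ⟨(x, η t, η' t), ?_, rfl⟩⟩
  exact ⟨(Nat.le_ceil _), hy.2, hy.1, hy'.2, hy'.1, hδ2.le⟩

end Geo
open Filter Topology TopologicalSpace

namespace GraphSel

variable {α β : Type*} [MetricSpace α] [MeasurableSpace α] [OpensMeasurableSpace α]
  [MetricSpace β] [CompleteSpace β] [SecondCountableTopology β] [Nonempty β]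
  [MeasurableSpace β] [BorelSpace β]

/-- chain constraint set -/
def S (u : ℕ → β) (l : List ℕ) : Set β :=
  {y | ∀ k < l.length, dist y (u (l.getD k 0)) ≤ (1/2:ℝ)^k}

lemma isClosed_S (u : ℕ → β) (l : List ℕ) : IsClosed (S u l) := by
  have : S u l = ⋂ k ∈ Finset.range l.length, {y | dist y (u (l.getD k 0)) ≤ (1/2:ℝ)^k} := by
    ext y; simp [S]
  rw [this]
  exact isClosed_biInter fun k _ => isClosed_le (by fun_prop) continuous_const

def Fib (G : Set (α × β)) (x : α) : Set β := {y | (x, y) ∈ G}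

def Good (u : ℕ → β) (G : Set (α × β)) (x : α) (l : List ℕ) : Prop :=
  (Fib G x ∩ S u l).Nonempty

lemma exists_pick (u : ℕ → β) (G : Set (α × β)) (hu : DenseRange u) (x : α) (l : List ℕ) :
    ∃ i, Good u G x (l ++ [i]) ∨ ¬ Good u G x l := by
  by_cases h : Good u G x l
  · obtain ⟨y, hyF, hyS⟩ := h
    obtain ⟨i, hi⟩ := Metric.denseRange_iff.1 hu y ((1/2:ℝ)^l.length) (by positivity)
    refine ⟨i, Or.inl ⟨y, hyF, fun k hk => ?_⟩⟩
    rw [List.length_append, List.length_singleton] at hk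
    rcases Nat.lt_succ_iff_lt_or_eq.1 hk with hk' | hk'
    · rw [List.getD_append _ _ _ _ hk']; exact hyS k hk'
    · subst hk'
      rw [List.getD_append_right _ _ _ _ le_rfl, Nat.sub_self]
      simpa [dist_comm] using hi.le
  · exact ⟨0, Or.inr h⟩

open Classical in
/-- pick the next index -/
noncomputable def Pick (u : ℕ → β) (G : Set (α × β)) (hu : DenseRange u)
    (x : α) (l : List ℕ) : ℕ :=
  Nat.find (exists_pick u G hu x l)

/-- the chain of indices -/
noncomputable def L (u : ℕ → β) (G : Set (α × β)) (hu : DenseRange u) : ℕ → α → List ℕ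
  | 0, _ => []
  | (j+1), x => L u G hu j x ++ [Pick u G hu x (L u G hu j x)]

lemma L_succ (u : ℕ → β) (G : Set (α × β)) (hu : DenseRange u) (j : ℕ) (x : α) :
    L u G hu (j+1) x = L u G hu j x ++ [Pick u G hu x (L u G hu j x)] := rfl

lemma length_L (u : ℕ → β) (G : Set (α × β)) (hu : DenseRange u) (j : ℕ) (x : α) :
    (L u G hu j x).length = j := by
  induction j with
  | zero => rfl
  | succ j ih => simp [L_succ, ih]

open Classical in
lemma pick_spec (u : ℕ → β) (G : Set (α × β)) (hu : DenseRange u) (x : α) (l : List ℕ) :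
    Good u G x (l ++ [Pick u G hu x l]) ∨ ¬ Good u G x l :=
  Nat.find_spec (exists_pick u G hu x l)

lemma good_L (u : ℕ → β) (G : Set (α × β)) (hu : DenseRange u)
    (x : α) (hx : (Fib G x).Nonempty) (j : ℕ) : Good u G x (L u G hu j x) := by
  induction j with
  | zero =>
    obtain ⟨y, hy⟩ := hx
    exact ⟨y, hy, by simp [S, L]⟩
  | succ j ih =>
    rcases pick_spec u G hu x (L u G hu j x) with h | h
    · rw [L_succ]; exact h
    · exact absurd ih h

lemma L_getD (u : ℕ → β) (G : Set (α × β)) (hu : DenseRange u) (x : α) :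
    ∀ j, ∀ k < j, (L u G hu j x).getD k 0 = (L u G hu (k+1) x).getD k 0 := by
  intro j
  induction j with
  | zero => intro k hk; omega
  | succ j ih =>
    intro k hk
    rcases Nat.lt_or_ge k j with hk' | hk'
    · rw [L_succ, List.getD_append _ _ _ _ (by rw [length_L]; exact hk')]
      exact ih k hk'
    · have hkj : k = j := by omega
      subst hkj
      rfl

/-- the approximating sequence -/
noncomputable def g (u : ℕ → β) (G : Set (α × β)) (hu : DenseRange u) (j : ℕ) (x : α) : β :=
  u ((L u G hu (j+1) x).getD j 0)

lemma dist_g_le (u : ℕ → β) (G : Set (α × β)) (hu : DenseRange u)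
    (x : α) (j J : ℕ) (hj : j < J) :
    ∀ y ∈ Fib G x ∩ S u (L u G hu J x), dist (g u G hu j x) y ≤ (1/2:ℝ)^j := by
  rintro y ⟨-, hyS⟩
  have h1 : dist y (u ((L u G hu J x).getD j 0)) ≤ (1/2:ℝ)^j :=
    hyS j (by rw [length_L]; exact hj)
  rw [L_getD u G hu x J j hj] at h1
  rw [g, dist_comm]
  exact h1

lemma dist_g_g (u : ℕ → β) (G : Set (α × β)) (hu : DenseRange u)
    (x : α) (hx : (Fib G x).Nonempty) (j j' : ℕ) :
    dist (g u G hu j x) (g u G hu j' x) ≤ (1/2:ℝ)^j + (1/2:ℝ)^j' := by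
  set J := max j j' + 1
  obtain ⟨y, hy⟩ := good_L u G hu x hx J
  calc dist (g u G hu j x) (g u G hu j' x)
      ≤ dist (g u G hu j x) y + dist (g u G hu j' x) y := dist_triangle_right _ _ _
  _ ≤ (1/2:ℝ)^j + (1/2:ℝ)^j' := by
      gcongr
      · exact dist_g_le u G hu x j J (by omega) y hy
      · exact dist_g_le u G hu x j' J (by omega) y hy

open Classical in
lemma g_const_of_empty (u : ℕ → β) (G : Set (α × β)) (hu : DenseRange u)
    (x : α) (hx : ¬ (Fib G x).Nonempty) (j : ℕ) : g u G hu j x = u 0 := by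
  have hpick : ∀ l, Pick u G hu x l = 0 := by
    intro l
    have h0 : Good u G x (l ++ [0]) ∨ ¬ Good u G x l := by
      right; rintro ⟨y, hy, -⟩; exact hx ⟨y, hy⟩
    exact Nat.le_zero.1 (Nat.find_le h0)
  have h2 : (L u G hu (j+1) x).getD j 0 = 0 := by
    rw [L_succ, List.getD_append_right _ _ _ _ (by rw [length_L]), length_L, Nat.sub_self,
      hpick]
    rfl
  rw [g, h2]

lemma cauchy_g (u : ℕ → β) (G : Set (α × β)) (hu : DenseRange u) (x : α) :
    CauchySeq (fun j => g u G hu j x) := by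
  by_cases hx : (Fib G x).Nonempty
  · apply cauchySeq_of_le_geometric (1/2 : ℝ) 2 (by norm_num)
    intro n
    calc dist (g u G hu n x) (g u G hu (n+1) x) ≤ (1/2:ℝ)^n + (1/2:ℝ)^(n+1) :=
          dist_g_g u G hu x hx n (n+1)
    _ ≤ 2 * (1/2:ℝ)^n := by
        rw [pow_succ]; nlinarith [pow_pos (by norm_num : (0:ℝ) < 1/2) n]
  · have : (fun j => g u G hu j x) = fun _ => u 0 :=
      funext fun j => g_const_of_empty u G hu x hx j
    rw [this]; exact cauchySeq_const _

/-- the selection -/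
noncomputable def sel (u : ℕ → β) (G : Set (α × β)) (hu : DenseRange u) (x : α) : β :=
  limUnder atTop (fun j => g u G hu j x)

lemma tendsto_sel (u : ℕ → β) (G : Set (α × β)) (hu : DenseRange u) (x : α) :
    Tendsto (fun j => g u G hu j x) atTop (𝓝 (sel u G hu x)) := by
  obtain ⟨y, hy⟩ := cauchySeq_tendsto_of_complete (cauchy_g u G hu x)
  rwa [sel, hy.limUnder_eq]

lemma sel_mem (u : ℕ → β) (G : Set (α × β)) (hu : DenseRange u) (hG : IsCompact G)
    (x : α) (hx : (Fib G x).Nonempty) : (x, sel u G hu x) ∈ G := by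
  have hcl : IsClosed (Fib G x) := by
    have h : Fib G x = Prod.mk x ⁻¹' G := rfl
    rw [h]
    exact hG.isClosed.preimage (Continuous.prodMk_right x)
  have hmem : sel u G hu x ∈ closure (Fib G x) := by
    rw [Metric.mem_closure_iff]
    intro ε hε
    obtain ⟨j, hj1, hj2⟩ : ∃ j, dist (sel u G hu x) (g u G hu j x) < ε/2 ∧ (1/2:ℝ)^j < ε/2 := by
      have h2 : Tendsto (fun j => (1/2:ℝ)^j) atTop (𝓝 0) := by
        apply tendsto_pow_atTop_nhds_zero_of_lt_one <;> norm_num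
      have h3 : Tendsto (fun j => dist (sel u G hu x) (g u G hu j x)) atTop (𝓝 0) := by
        simpa [dist_comm] using tendsto_iff_dist_tendsto_zero.1 (tendsto_sel u G hu x)
      have h4 := (h3.eventually (eventually_lt_nhds (show (0:ℝ) < ε/2 by linarith))).and
        (h2.eventually (eventually_lt_nhds (show (0:ℝ) < ε/2 by linarith)))
      obtain ⟨j, hj⟩ := h4.exists
      exact ⟨j, hj.1, hj.2⟩
    obtain ⟨y, hy⟩ := good_L u G hu x hx (j+1)
    refine ⟨y, hy.1, ?_⟩
    calc dist (sel u G hu x) y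
        ≤ dist (sel u G hu x) (g u G hu j x) + dist (g u G hu j x) y := dist_triangle _ _ _
    _ < ε/2 + ε/2 := by
        apply add_lt_add_of_lt_of_le hj1
        exact le_trans (dist_g_le u G hu x j (j+1) (by omega) y hy) hj2.le
    _ = ε := by ring
  rwa [hcl.closure_eq] at hmem

end GraphSel

namespace GraphSel2
open GraphSel

variable {α β : Type*} [MetricSpace α] [MeasurableSpace α] [OpensMeasurableSpace α]
  [MetricSpace β] [CompleteSpace β] [SecondCountableTopology β] [Nonempty β]
  [MeasurableSpace β] [BorelSpace β]

lemma measurableSet_good (u : ℕ → β) (G : Set (α × β)) (hG : IsCompact G) (l : List ℕ) :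
    MeasurableSet {x : α | Good u G x l} := by
  have heq : {x : α | Good u G x l} = Prod.fst '' (G ∩ (univ ×ˢ S u l)) := by
    ext x
    simp only [Good, Fib, mem_setOf_eq, Set.Nonempty, mem_inter_iff, mem_image, mem_prod,
      mem_univ, true_and, Prod.exists]
    constructor
    · rintro ⟨y, hy1, hy2⟩; exact ⟨x, y, ⟨hy1, hy2⟩, rfl⟩
    · rintro ⟨a, b, ⟨h1, h2⟩, rfl⟩; exact ⟨b, h1, h2⟩
  rw [heq]
  have hcpt : IsCompact (G ∩ (univ ×ˢ S u l)) :=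
    hG.inter_right (isClosed_univ.prod (isClosed_S u l))
  exact (hcpt.image continuous_fst).isClosed.measurableSet

open Classical in
lemma measurableSet_pick (u : ℕ → β) (G : Set (α × β)) (hu : DenseRange u) (hG : IsCompact G)
    (l : List ℕ) (i : ℕ) : MeasurableSet {x : α | Pick u G hu x l = i} := by
  have heq : {x : α | Pick u G hu x l = i} =
      ({x | Good u G x (l ++ [i]) ∨ ¬ Good u G x l} ∩
        ⋂ k ∈ Finset.range i, {x | Good u G x (l ++ [k]) ∨ ¬ Good u G x l}ᶜ) := by
    ext x
    simp only [Pick, mem_inter_iff, mem_setOf_eq, mem_iInter, Finset.mem_range, mem_compl_iff,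
      Nat.find_eq_iff]
  rw [heq]
  have hm : ∀ l' : List ℕ, MeasurableSet {x : α | Good u G x (l') ∨ ¬ Good u G x l} := by
    intro l'
    have : {x : α | Good u G x l' ∨ ¬ Good u G x l} =
        {x | Good u G x l'} ∪ {x | Good u G x l}ᶜ := by ext x; simp
    rw [this]
    exact (measurableSet_good u G hG l').union (measurableSet_good u G hG l).compl
  exact (hm _).inter (MeasurableSet.biInter (Finset.range i).countable_toSet
    fun k _ => (hm _).compl)

lemma measurableSet_L (u : ℕ → β) (G : Set (α × β)) (hu : DenseRange u) (hG : IsCompact G)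
    (j : ℕ) (l : List ℕ) : MeasurableSet {x : α | L u G hu j x = l} := by
  induction j generalizing l with
  | zero =>
    by_cases h : l = []
    · subst h
      have : {x : α | L u G hu 0 x = []} = univ := by ext x; simp [L]
      rw [this]; exact MeasurableSet.univ
    · have : {x : α | L u G hu 0 x = l} = ∅ := by
        ext x; simp only [mem_setOf_eq, mem_empty_iff_false, iff_false]
        intro hc; exact h (by rw [← hc]; rfl)
      rw [this]; exact MeasurableSet.empty
  | succ j ih =>
    have heq : {x : α | L u G hu (j+1) x = l} =
        ⋃ (l' : List ℕ) (i : ℕ) (_ : l' ++ [i] = l),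
          ({x | L u G hu j x = l'} ∩ {x | Pick u G hu x l' = i}) := by
      ext x
      simp only [mem_setOf_eq, mem_iUnion, mem_inter_iff]
      constructor
      · intro h
        exact ⟨L u G hu j x, Pick u G hu x (L u G hu j x), by rw [← L_succ, h], rfl, rfl⟩
      · rintro ⟨l', i, hli, h1, h2⟩
        rw [L_succ, h1, h2, hli]
    rw [heq]
    exact MeasurableSet.iUnion fun l' => MeasurableSet.iUnion fun i =>
      MeasurableSet.iUnion fun _ => (ih l').inter (measurableSet_pick u G hu hG l' i)

lemma measurable_g (u : ℕ → β) (G : Set (α × β)) (hu : DenseRange u) (hG : IsCompact G)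
    (j : ℕ) : Measurable (g u G hu j) := by
  have hidx : Measurable (fun x => (L u G hu (j+1) x).getD j 0) := by
    apply measurable_to_countable'
    intro i
    have : (fun x => (L u G hu (j+1) x).getD j 0) ⁻¹' {i} =
        ⋃ (l : List ℕ) (_ : l.getD j 0 = i), {x | L u G hu (j+1) x = l} := by
      ext x
      simp only [mem_preimage, mem_singleton_iff, mem_iUnion, mem_setOf_eq]
      constructor
      · intro h; exact ⟨L u G hu (j+1) x, h, rfl⟩
      · rintro ⟨l, hl, h⟩; rw [h]; exact hl
    rw [this]
    exact MeasurableSet.iUnion fun l => MeasurableSet.iUnion fun _ =>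
      measurableSet_L u G hu hG (j+1) l
  exact measurable_from_top.comp hidx

lemma measurable_sel (u : ℕ → β) (G : Set (α × β)) (hu : DenseRange u) (hG : IsCompact G) :
    Measurable (sel u G hu) := by
  apply measurable_of_tendsto_metrizable (fun j => measurable_g u G hu hG j)
  rw [tendsto_pi_nhds]
  exact fun x => tendsto_sel u G hu x

end GraphSel2

/-- Measurable selection from a compact graph. -/
lemma exists_measurable_selection {α β : Type*} [MetricSpace α] [MeasurableSpace α]
    [OpensMeasurableSpace α] [MetricSpace β] [CompleteSpace β] [SecondCountableTopology β]
    [Nonempty β] [MeasurableSpace β] [BorelSpace β]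
    (G : Set (α × β)) (hG : IsCompact G) :
    ∃ f : α → β, Measurable f ∧ ∀ p ∈ G, (p.1, f p.1) ∈ G := by
  have hu : DenseRange (TopologicalSpace.denseSeq β) := TopologicalSpace.denseRange_denseSeq β
  refine ⟨GraphSel.sel _ G hu, GraphSel2.measurable_sel _ G hu hG, fun p hp => ?_⟩
  exact GraphSel.sel_mem _ G hu hG p.1 ⟨p.2, hp⟩

section Main
open scoped ENNReal

variable [MetricSpace X] [MeasurableSpace X] [BorelSpace X]

lemma lip_abs_le {φ : X → ℝ} (hφ : LipschitzWith 1 φ) (a b : X) : |φ a - φ b| ≤ dist a b := by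
  have h := hφ.dist_le_mul a b
  rw [Real.dist_eq] at h
  simpa using h

lemma isCompact_Fset (hproper : ProperSpace X) {φ : X → ℝ} (hφ : LipschitzWith 1 φ)
    (x₀ : X) (t δ R : ℝ) : IsCompact (Fset φ x₀ t δ R) := by
  haveI := hproper
  have hc : Continuous φ := hφ.continuous
  have hclosed : IsClosed (Fset φ x₀ t δ R) := by
    rw [show Fset φ x₀ t δ R =
        {q : X × X × X | dist q.1 x₀ ≤ R} ∩ ({q | φ q.1 - φ q.2.1 = t} ∩
        ({q | dist q.1 q.2.1 = t} ∩ ({q | φ q.1 - φ q.2.2 = t} ∩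
        ({q | dist q.1 q.2.2 = t} ∩ {q | δ ≤ dist q.2.1 q.2.2})))) from by
      ext q; simp [Fset]]
    refine (isClosed_le (continuous_fst.dist continuous_const) continuous_const).inter
      ((isClosed_eq ((hc.comp continuous_fst).sub
        (hc.comp (continuous_fst.comp continuous_snd))) continuous_const).inter
      ((isClosed_eq (continuous_fst.dist (continuous_fst.comp continuous_snd))
        continuous_const).inter
      ((isClosed_eq ((hc.comp continuous_fst).sub
        (hc.comp (continuous_snd.comp continuous_snd))) continuous_const).inter
      ((isClosed_eq (continuous_fst.dist (continuous_snd.comp continuous_snd))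
        continuous_const).inter
      (isClosed_le continuous_const ((continuous_fst.comp continuous_snd).dist
        (continuous_snd.comp continuous_snd)))))))
  apply IsCompact.of_isClosed_subset
    ((isCompact_closedBall x₀ R).prod ((isCompact_closedBall x₀ (R + t)).prod
      (isCompact_closedBall x₀ (R + t)))) hclosed
  rintro ⟨x, y, y'⟩ ⟨h1, h2, h3, h4, h5, h6⟩
  refine ⟨h1, ?_, ?_⟩ <;> rw [Metric.mem_closedBall]
  · calc dist y x₀ ≤ dist y x + dist x x₀ := dist_triangle _ _ _
    _ ≤ R + t := by rw [dist_comm, h3]; linarith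
  · calc dist y' x₀ ≤ dist y' x + dist x x₀ := dist_triangle _ _ _
    _ ≤ R + t := by rw [dist_comm, h5]; linarith

lemma moment_lt_top (ν : Measure X) [IsFiniteMeasure ν] (x₀ : X) (c : ℝ)
    (h : ∀ᵐ x ∂ν, dist x x₀ ≤ c) :
    ∫⁻ x, ENNReal.ofReal (dist x x₀ ^ 2) ∂ν < ⊤ := by
  calc ∫⁻ x, ENNReal.ofReal (dist x x₀ ^ 2) ∂ν ≤ ∫⁻ _, ENNReal.ofReal (c ^ 2) ∂ν :=
        lintegral_mono_ae (h.mono fun x hx => ENNReal.ofReal_le_ofReal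
          (by nlinarith [(dist_nonneg : (0:ℝ) ≤ dist x x₀)]))
  _ = ENNReal.ofReal (c ^ 2) * ν univ := lintegral_const _
  _ < ⊤ := ENNReal.mul_lt_top ENNReal.ofReal_lt_top (measure_lt_top ν univ)

lemma null_branch_config
    (hproper : ProperSpace X)
    (m : Measure X) [IsProbabilityMeasure m]
    (φ : X → ℝ) (hφ : LipschitzWith 1 φ)
    (H : ∀ μ₀ μ₁ : Measure X, IsProbabilityMeasure μ₀ → IsProbabilityMeasure μ₁ →
      (∃ x₀ : X, ∫⁻ x, ENNReal.ofReal (dist x x₀ ^ 2) ∂μ₀ < ⊤) →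
      (∃ x₀ : X, ∫⁻ x, ENNReal.ofReal (dist x x₀ ^ 2) ∂μ₁ < ⊤) →
      μ₀ ≪ m →
      ∀ π : Measure (X × X), IsProbabilityMeasure π →
        π.map Prod.fst = μ₀ → π.map Prod.snd = μ₁ →
        (∀ π' : Measure (X × X), IsProbabilityMeasure π' →
          π'.map Prod.fst = μ₀ → π'.map Prod.snd = μ₁ →
          ∫⁻ p, ENNReal.ofReal (dist p.1 p.2 ^ 2) ∂π ≤
            ∫⁻ p, ENNReal.ofReal (dist p.1 p.2 ^ 2) ∂π') →
        ∃ T : X → X, Measurable T ∧ π {p : X × X | p.2 = T p.1} = 1)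
    (x₀ : X) (t δ R : ℝ) (ht : 0 < t) (hδ : 0 < δ) :
    m (Prod.fst '' Fset φ x₀ t δ R) = 0 := by
  haveI := hproper
  by_contra hm0
  set F := Fset φ x₀ t δ R with hF
  set K := Prod.fst '' F with hKdef
  have hFc : IsCompact F := isCompact_Fset hproper hφ x₀ t δ R
  have hKc : IsCompact K := hFc.image continuous_fst
  have hKm : MeasurableSet K := hKc.isClosed.measurableSet
  haveI : Nonempty X := ⟨x₀⟩
  -- measurable selection
  obtain ⟨f, hfm, hfsel⟩ := exists_measurable_selection (α := X) (β := X × X) F hFc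
  set f₁ : X → X := fun x => (f x).1 with hf₁def
  set f₂ : X → X := fun x => (f x).2 with hf₂def
  have hf₁ : Measurable f₁ := measurable_fst.comp hfm
  have hf₂ : Measurable f₂ := measurable_snd.comp hfm
  have hsel : ∀ x ∈ K, (x, f₁ x, f₂ x) ∈ F := by
    rintro x ⟨p, hp, rfl⟩
    exact hfsel p hp
  have hprop : ∀ x ∈ K, φ x - φ (f₁ x) = t ∧ dist x (f₁ x) = t ∧ φ x - φ (f₂ x) = t ∧
      dist x (f₂ x) = t ∧ δ ≤ dist (f₁ x) (f₂ x) ∧ dist x x₀ ≤ R := by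
    intro x hx
    have h := hsel x hx
    exact ⟨h.2.1, h.2.2.1, h.2.2.2.1, h.2.2.2.2.1, h.2.2.2.2.2, h.1⟩
  -- the measures
  have hmtop : m K ≠ ⊤ := (measure_lt_top m K).ne
  set μ : Measure X := (m K)⁻¹ • m.restrict K with hμdef
  haveI hμprob : IsProbabilityMeasure μ := by
    constructor
    rw [hμdef, Measure.smul_apply, Measure.restrict_apply MeasurableSet.univ, univ_inter,
      smul_eq_mul, ENNReal.inv_mul_cancel hm0 hmtop]
  have hμKc : μ Kᶜ = 0 := by
    rw [hμdef, Measure.smul_apply, Measure.restrict_apply hKm.compl, compl_inter_self]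
    simp
  have hμae : ∀ᵐ x ∂μ, x ∈ K := by
    rw [ae_iff]
    exact hμKc
  have hac : μ ≪ m := by
    intro s hs
    rw [hμdef, Measure.smul_apply, Measure.restrict_apply' hKm, smul_eq_mul,
      measure_mono_null inter_subset_left hs, mul_zero]
  set T₁ : X → X × X := fun x => (x, f₁ x) with hT₁def
  set T₂ : X → X × X := fun x => (x, f₂ x) with hT₂def
  have hT₁ : Measurable T₁ := measurable_id.prodMk hf₁
  have hT₂ : Measurable T₂ := measurable_id.prodMk hf₂
  set π : Measure (X × X) := (2:ℝ≥0∞)⁻¹ • μ.map T₁ + (2:ℝ≥0∞)⁻¹ • μ.map T₂ with hπdef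
  set μ₁ : Measure X := (2:ℝ≥0∞)⁻¹ • μ.map f₁ + (2:ℝ≥0∞)⁻¹ • μ.map f₂ with hμ₁def
  haveI hPf : IsProbabilityMeasure (μ.map f₁) := Measure.isProbabilityMeasure_map hf₁.aemeasurable
  haveI hPg : IsProbabilityMeasure (μ.map f₂) := Measure.isProbabilityMeasure_map hf₂.aemeasurable
  haveI hPT₁ : IsProbabilityMeasure (μ.map T₁) := Measure.isProbabilityMeasure_map hT₁.aemeasurable
  haveI hPT₂ : IsProbabilityMeasure (μ.map T₂) := Measure.isProbabilityMeasure_map hT₂.aemeasurable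
  haveI hμ₁prob : IsProbabilityMeasure μ₁ := by
    constructor
    rw [hμ₁def, Measure.add_apply, Measure.smul_apply, Measure.smul_apply, measure_univ,
      measure_univ, smul_eq_mul, mul_one, ENNReal.inv_two_add_inv_two]
  haveI hπprob : IsProbabilityMeasure π := by
    constructor
    rw [hπdef, Measure.add_apply, Measure.smul_apply, Measure.smul_apply, measure_univ,
      measure_univ, smul_eq_mul, mul_one, ENNReal.inv_two_add_inv_two]
  -- marginals
  have hmapfst : π.map Prod.fst = μ := by
    rw [hπdef, Measure.map_add _ _ measurable_fst,
      Measure.map_smul (2:ℝ≥0∞)⁻¹ (μ.map T₁) Prod.fst,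
      Measure.map_smul (2:ℝ≥0∞)⁻¹ (μ.map T₂) Prod.fst,
      Measure.map_map measurable_fst hT₁, Measure.map_map measurable_fst hT₂,
      show Prod.fst ∘ T₁ = id from rfl, show Prod.fst ∘ T₂ = id from rfl, Measure.map_id,
      ← add_smul, ENNReal.inv_two_add_inv_two, one_smul]
  have hmapsnd : π.map Prod.snd = μ₁ := by
    rw [hπdef, Measure.map_add _ _ measurable_snd,
      Measure.map_smul (2:ℝ≥0∞)⁻¹ (μ.map T₁) Prod.snd,
      Measure.map_smul (2:ℝ≥0∞)⁻¹ (μ.map T₂) Prod.snd,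
      Measure.map_map measurable_snd hT₁, Measure.map_map measurable_snd hT₂,
      show Prod.snd ∘ T₁ = f₁ from rfl, show Prod.snd ∘ T₂ = f₂ from rfl, hμ₁def]
  -- moments
  have hmom₀ : ∫⁻ x, ENNReal.ofReal (dist x x₀ ^ 2) ∂μ < ⊤ :=
    moment_lt_top μ x₀ R (hμae.mono fun x hx => (hprop x hx).2.2.2.2.2)
  have hbadm : MeasurableSet {y : X | ¬ dist y x₀ ≤ R + t} :=
    (measurableSet_le (measurable_id.dist measurable_const) measurable_const).compl
  have hsubbad : ∀ g : X → X, (∀ x ∈ K, dist x (g x) = t) →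
      μ (g ⁻¹' {y : X | ¬ dist y x₀ ≤ R + t}) = 0 := by
    intro g hg
    refine measure_mono_null ?_ hμKc
    intro x hx
    simp only [mem_preimage, mem_setOf_eq] at hx
    simp only [mem_compl_iff]
    intro hxK
    exact hx (by
      calc dist (g x) x₀ ≤ dist (g x) x + dist x x₀ := dist_triangle _ _ _
      _ ≤ R + t := by
          rw [dist_comm, hg x hxK]
          linarith [(hprop x hxK).2.2.2.2.2])
  have hmap1bad : μ.map f₁ {y : X | ¬ dist y x₀ ≤ R + t} = 0 := by
    rw [Measure.map_apply hf₁ hbadm]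
    exact hsubbad f₁ (fun x hx => (hprop x hx).2.1)
  have hmap2bad : μ.map f₂ {y : X | ¬ dist y x₀ ≤ R + t} = 0 := by
    rw [Measure.map_apply hf₂ hbadm]
    exact hsubbad f₂ (fun x hx => (hprop x hx).2.2.2.1)
  have hμ₁ae : ∀ᵐ y ∂μ₁, dist y x₀ ≤ R + t := by
    rw [ae_iff]
    rw [hμ₁def, Measure.add_apply, Measure.smul_apply, Measure.smul_apply, hmap1bad, hmap2bad]
    simp
  have hmom₁ : ∫⁻ x, ENNReal.ofReal (dist x x₀ ^ 2) ∂μ₁ < ⊤ :=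
    moment_lt_top μ₁ x₀ (R + t) hμ₁ae
  -- cost of π
  have hcm : Measurable fun p : X × X => ENNReal.ofReal (dist p.1 p.2 ^ 2) :=
    ((measurable_fst.dist measurable_snd).pow_const 2).ennreal_ofReal
  have hcost : ∫⁻ p, ENNReal.ofReal (dist p.1 p.2 ^ 2) ∂π = ENNReal.ofReal (t ^ 2) := by
    rw [hπdef, lintegral_add_measure, lintegral_smul_measure, lintegral_smul_measure,
      lintegral_map hcm hT₁, lintegral_map hcm hT₂]
    have h1 : ∫⁻ x, ENNReal.ofReal (dist (T₁ x).1 (T₁ x).2 ^ 2) ∂μ = ENNReal.ofReal (t ^ 2) := by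
      rw [lintegral_congr_ae (hμae.mono fun x hx => by
        rw [show (T₁ x).1 = x from rfl, show (T₁ x).2 = f₁ x from rfl, (hprop x hx).2.1]),
        lintegral_const, measure_univ, mul_one]
    have h2 : ∫⁻ x, ENNReal.ofReal (dist (T₂ x).1 (T₂ x).2 ^ 2) ∂μ = ENNReal.ofReal (t ^ 2) := by
      rw [lintegral_congr_ae (hμae.mono fun x hx => by
        rw [show (T₂ x).1 = x from rfl, show (T₂ x).2 = f₂ x from rfl, (hprop x hx).2.2.2.1]),
        lintegral_const, measure_univ, mul_one]
    rw [h1, h2, ← add_smul, ENNReal.inv_two_add_inv_two, one_smul]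
  -- integrability of φ
  have hφc : Continuous φ := hφ.continuous
  have hφb : ∀ (ν : Measure X) (c : ℝ), IsProbabilityMeasure ν → (∀ᵐ y ∂ν, dist y x₀ ≤ c) →
      Integrable φ ν := by
    intro ν c hν hc
    refine Integrable.mono' (integrable_const (|φ x₀| + c)) hφc.aestronglyMeasurable ?_
    refine hc.mono fun y hy => ?_
    have h := lip_abs_le hφ y x₀
    rw [Real.norm_eq_abs]
    calc |φ y| = |(φ y - φ x₀) + φ x₀| := by ring_nf
    _ ≤ |φ y - φ x₀| + |φ x₀| := abs_add_le _ _
    _ ≤ |φ x₀| + c := by linarith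
  have hμaeb : ∀ᵐ x ∂μ, dist x x₀ ≤ R := hμae.mono fun x hx => (hprop x hx).2.2.2.2.2
  have hIμ : Integrable φ μ := hφb μ R inferInstance hμaeb
  have hIm1 : Integrable φ (μ.map f₁) :=
    hφb (μ.map f₁) (R + t) inferInstance (by rw [ae_iff]; exact hmap1bad)
  have hIm2 : Integrable φ (μ.map f₂) :=
    hφb (μ.map f₂) (R + t) inferInstance (by rw [ae_iff]; exact hmap2bad)
  -- μ₁-mean of φ
  have e4a : ∫ x, φ (f₁ x) ∂μ = ∫ x, (φ x - t) ∂μ :=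
    integral_congr_ae (hμae.mono fun x hx => by
      have h := (hprop x hx).1; show φ (f₁ x) = φ x - t; linarith)
  have e5a : ∫ x, φ (f₂ x) ∂μ = ∫ x, (φ x - t) ∂μ :=
    integral_congr_ae (hμae.mono fun x hx => by
      have h := (hprop x hx).2.2.1; show φ (f₂ x) = φ x - t; linarith)
  have e4b : ∫ x, (φ x - t) ∂μ = ∫ x, φ x ∂μ - t := by
    rw [integral_sub hIμ (integrable_const t), integral_const, probReal_univ,
      one_smul]
  have e3 : ∫ y, φ y ∂μ₁ = ∫ x, φ x ∂μ - t := by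
    rw [hμ₁def, integral_add_measure (hIm1.smul_measure (by norm_num))
        (hIm2.smul_measure (by norm_num)),
      integral_smul_measure, integral_smul_measure,
      integral_map hf₁.aemeasurable hφc.aestronglyMeasurable,
      integral_map hf₂.aemeasurable hφc.aestronglyMeasurable, e4a, e5a, e4b]
    have h2 : ((2:ℝ≥0∞)⁻¹).toReal = (2:ℝ)⁻¹ := by
      rw [ENNReal.toReal_inv]; norm_num
    rw [h2, smul_eq_mul]
    ring
  -- optimality of π
  have hopt : ∀ π' : Measure (X × X), IsProbabilityMeasure π' → π'.map Prod.fst = μ →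
      π'.map Prod.snd = μ₁ →
      ENNReal.ofReal (t ^ 2) ≤ ∫⁻ p, ENNReal.ofReal (dist p.1 p.2 ^ 2) ∂π' := by
    intro π' hπ' hm1 hm2
    set c : ℝ := R + (R + t) with hcdef
    have hae1 : ∀ᵐ p ∂π', p.1 ∈ K := by
      rw [ae_iff]
      have he : {p : X × X | ¬ p.1 ∈ K} = Prod.fst ⁻¹' Kᶜ := rfl
      rw [he, ← Measure.map_apply measurable_fst hKm.compl, hm1]
      exact hμKc
    have hae2 : ∀ᵐ p ∂π', dist p.2 x₀ ≤ R + t := by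
      rw [ae_iff]
      have he : {p : X × X | ¬ dist p.2 x₀ ≤ R + t} =
          Prod.snd ⁻¹' {y : X | ¬ dist y x₀ ≤ R + t} := rfl
      rw [he, ← Measure.map_apply measurable_snd hbadm, hm2]
      exact ae_iff.1 hμ₁ae
    have haeb : ∀ᵐ p ∂π', dist p.1 p.2 ≤ c := by
      refine (hae1.and hae2).mono fun p hp => ?_
      obtain ⟨h1, h2⟩ := hp
      calc dist p.1 p.2 ≤ dist p.1 x₀ + dist x₀ p.2 := dist_triangle _ _ _
      _ ≤ c := by
          rw [dist_comm x₀ p.2]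
          have h3 := (hprop _ h1).2.2.2.2.2
          rw [hcdef]; linarith
    have hmh : Measurable fun p : X × X => dist p.1 p.2 := measurable_fst.dist measurable_snd
    have hInt_h : Integrable (fun p : X × X => dist p.1 p.2) π' := by
      refine Integrable.mono' (integrable_const c) hmh.aestronglyMeasurable ?_
      exact haeb.mono fun p hp => by
        rw [Real.norm_eq_abs, abs_of_nonneg dist_nonneg]; exact hp
    have hInt_h2 : Integrable (fun p : X × X => dist p.1 p.2 ^ 2) π' := by
      refine Integrable.mono' (integrable_const (c ^ 2))
        (hmh.pow_const 2).aestronglyMeasurable ?_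
      exact haeb.mono fun p hp => by
        rw [Real.norm_eq_abs, abs_of_nonneg (by positivity)]
        nlinarith [(dist_nonneg : (0:ℝ) ≤ dist p.1 p.2)]
    have hInt_f : Integrable (fun p : X × X => φ p.1) π' := by
      have h := hφb μ R inferInstance hμaeb
      rw [← hm1, integrable_map_measure hφc.aestronglyMeasurable
        measurable_fst.aemeasurable] at h
      exact h
    have hInt_g : Integrable (fun p : X × X => φ p.2) π' := by
      have h := hφb μ₁ (R + t) inferInstance hμ₁ae
      rw [← hm2, integrable_map_measure hφc.aestronglyMeasurable
        measurable_snd.aemeasurable] at h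
      exact h
    have e1 : ∫ x, φ x ∂μ = ∫ p, φ p.1 ∂π' := by
      rw [← hm1, integral_map measurable_fst.aemeasurable hφc.aestronglyMeasurable]
    have e2 : ∫ y, φ y ∂μ₁ = ∫ p, φ p.2 ∂π' := by
      rw [← hm2, integral_map measurable_snd.aemeasurable hφc.aestronglyMeasurable]
    have hψ : ∫ p, (φ p.1 - φ p.2) ∂π' = t := by
      rw [integral_sub hInt_f hInt_g, ← e1, ← e2, e3]; ring
    have hmean : t ≤ ∫ p, dist p.1 p.2 ∂π' := by
      rw [← hψ]
      exact integral_mono (hInt_f.sub hInt_g) hInt_h fun p => lip_sub_le hφ _ _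
    set a : ℝ := ∫ p, dist p.1 p.2 ∂π' with hadef
    have hvar : a ^ 2 ≤ ∫ p, dist p.1 p.2 ^ 2 ∂π' := by
      have h0 : (0:ℝ) ≤ ∫ p, (dist p.1 p.2 - a) ^ 2 ∂π' := integral_nonneg fun p => sq_nonneg _
      have hexp : ∫ p, (dist p.1 p.2 - a) ^ 2 ∂π' =
          ∫ p, dist p.1 p.2 ^ 2 ∂π' - 2 * a * a + a ^ 2 := by
        have hre : (fun p : X × X => (dist p.1 p.2 - a) ^ 2) =
            fun p => dist p.1 p.2 ^ 2 - 2 * a * dist p.1 p.2 + a ^ 2 := by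
          funext p; ring
        have hIc : Integrable (fun p : X × X => 2 * a * dist p.1 p.2) π' :=
          hInt_h.const_mul (2 * a)
        have hIsub : Integrable (fun p : X × X =>
            dist p.1 p.2 ^ 2 - 2 * a * dist p.1 p.2) π' := hInt_h2.sub hIc
        rw [hre, integral_add hIsub (integrable_const _),
          integral_sub hInt_h2 hIc, integral_const_mul, integral_const,
          probReal_univ, one_smul, ← hadef]
      nlinarith [h0, hexp]
    have htsq : t ^ 2 ≤ ∫ p, dist p.1 p.2 ^ 2 ∂π' := by nlinarith [hmean, hvar, ht.le]
    calc ENNReal.ofReal (t ^ 2) ≤ ENNReal.ofReal (∫ p, dist p.1 p.2 ^ 2 ∂π') :=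
          ENNReal.ofReal_le_ofReal htsq
    _ = ∫⁻ p, ENNReal.ofReal (dist p.1 p.2 ^ 2) ∂π' :=
          ofReal_integral_eq_lintegral_ofReal hInt_h2 (Filter.Eventually.of_forall fun p => by
            positivity)
  -- apply the hypothesis
  obtain ⟨T, hTm, hT1⟩ := H μ μ₁ hμprob hμ₁prob ⟨x₀, hmom₀⟩ ⟨x₀, hmom₁⟩ hac π hπprob hmapfst
    hmapsnd (fun π' h1 h2 h3 => by rw [hcost]; exact hopt π' h1 h2 h3)
  have hGr : MeasurableSet {p : X × X | p.2 = T p.1} :=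
    MeasureTheory.StronglyMeasurable.measurableSet_eq_fun measurable_snd.stronglyMeasurable
      (hTm.comp measurable_fst).stronglyMeasurable
  have hA1m : MeasurableSet {x : X | f₁ x = T x} :=
    MeasureTheory.StronglyMeasurable.measurableSet_eq_fun hf₁.stronglyMeasurable hTm.stronglyMeasurable
  have hA2m : MeasurableSet {x : X | f₂ x = T x} :=
    MeasureTheory.StronglyMeasurable.measurableSet_eq_fun hf₂.stronglyMeasurable hTm.stronglyMeasurable
  have hPfGr : μ.map T₁ {p : X × X | p.2 = T p.1} = μ {x | f₁ x = T x} := by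
    rw [Measure.map_apply hT₁ hGr]; rfl
  have hPgGr : μ.map T₂ {p : X × X | p.2 = T p.1} = μ {x | f₂ x = T x} := by
    rw [Measure.map_apply hT₂ hGr]; rfl
  rw [hπdef, Measure.add_apply, Measure.smul_apply, Measure.smul_apply, hPfGr, hPgGr,
    smul_eq_mul, smul_eq_mul] at hT1
  have hone1 : μ {x | f₁ x = T x} = 1 := by
    have hstep : (1:ℝ≥0∞) ≤ 2⁻¹ * μ {x | f₁ x = T x} + 2⁻¹ := by
      rw [← hT1]
      refine add_le_add_right ?_ _
      calc (2:ℝ≥0∞)⁻¹ * μ {x | f₂ x = T x} ≤ 2⁻¹ * 1 := mul_le_mul_right prob_le_one _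
      _ = 2⁻¹ := mul_one _
    have h2 : (2:ℝ≥0∞)⁻¹ ≤ 2⁻¹ * μ {x | f₁ x = T x} := by
      nth_rewrite 1 [← ENNReal.one_sub_inv_two]
      exact tsub_le_iff_right.2 hstep
    have h3 : (1:ℝ≥0∞) ≤ μ {x | f₁ x = T x} :=
      (ENNReal.mul_le_mul_iff_right (a := (2:ℝ≥0∞)⁻¹) (by norm_num) (by norm_num)).1 (by rw [mul_one]; exact h2)
    exact le_antisymm prob_le_one h3
  have hone2 : μ {x | f₂ x = T x} = 1 := by
    have hstep : (1:ℝ≥0∞) ≤ 2⁻¹ * μ {x | f₂ x = T x} + 2⁻¹ := by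
      rw [← hT1, add_comm]
      refine add_le_add_right ?_ _
      calc (2:ℝ≥0∞)⁻¹ * μ {x | f₁ x = T x} ≤ 2⁻¹ * 1 := mul_le_mul_right prob_le_one _
      _ = 2⁻¹ := mul_one _
    have h2 : (2:ℝ≥0∞)⁻¹ ≤ 2⁻¹ * μ {x | f₂ x = T x} := by
      nth_rewrite 1 [← ENNReal.one_sub_inv_two]
      exact tsub_le_iff_right.2 hstep
    have h3 : (1:ℝ≥0∞) ≤ μ {x | f₂ x = T x} :=
      (ENNReal.mul_le_mul_iff_right (a := (2:ℝ≥0∞)⁻¹) (by norm_num) (by norm_num)).1 (by rw [mul_one]; exact h2)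
    exact le_antisymm prob_le_one h3
  have hae1 : ∀ᵐ x ∂μ, f₁ x = T x := by
    rw [ae_iff]
    have he : {x : X | ¬ f₁ x = T x} = {x | f₁ x = T x}ᶜ := rfl
    rw [he, measure_compl hA1m (measure_ne_top _ _), hone1, measure_univ, tsub_self]
  have hae2 : ∀ᵐ x ∂μ, f₂ x = T x := by
    rw [ae_iff]
    have he : {x : X | ¬ f₂ x = T x} = {x | f₂ x = T x}ᶜ := rfl
    rw [he, measure_compl hA2m (measure_ne_top _ _), hone2, measure_univ, tsub_self]
  haveI : (MeasureTheory.ae μ).NeBot := by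
    refine ae_neBot.2 ?_
    exact IsProbabilityMeasure.ne_zero μ
  obtain ⟨x, ⟨hxK, hx1⟩, hx2⟩ := ((hμae.and hae1).and hae2).exists
  have hd := (hprop x hxK).2.2.2.2.1
  rw [hx1, hx2, dist_self] at hd
  linarith

end Main

section Finale
variable [MetricSpace X]

lemma gamma_neg (φ : X → ℝ) : Gamma (fun x => -φ x) = GammaInv φ := by
  ext p
  simp only [Gamma, GammaInv, mem_setOf_eq, dist_comm p.2 p.1]
  constructor <;> intro h <;> linarith

lemma gammaInv_neg (φ : X → ℝ) : GammaInv (fun x => -φ x) = Gamma φ := by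
  ext p
  simp only [Gamma, GammaInv, mem_setOf_eq, dist_comm p.2 p.1]
  constructor <;> intro h <;> linarith

lemma rays_neg (φ : X → ℝ) : Rays (fun x => -φ x) = Rays φ := by
  rw [Rays, Rays, gamma_neg, gammaInv_neg, union_comm]

lemma te_neg (φ : X → ℝ) : Te (fun x => -φ x) = Te φ := by
  rw [Te, Te, gamma_neg, gammaInv_neg, union_comm]

lemma gammaOf_neg (φ : X → ℝ) (x : X) : GammaOf (fun x => -φ x) x = GammaInvOf φ x := by
  ext y
  show (x, y) ∈ Gamma (fun x => -φ x) ↔ (x, y) ∈ GammaInv φ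
  rw [gamma_neg]

lemma aminus_eq_aplus_neg (φ : X → ℝ) : Aminus φ = Aplus (fun x => -φ x) := by
  ext x
  simp only [Aminus, Aplus, mem_setOf_eq, te_neg, rays_neg, gammaOf_neg]

end Finale

theorem stmt8' [MetricSpace X] [MeasurableSpace X] [BorelSpace X]
    (hproper : ProperSpace X) (hgeod : GeodesicSpace X)
    (m : Measure X) [IsProbabilityMeasure m]
    (φ : X → ℝ) (hφ : LipschitzWith 1 φ)
    (H : ∀ μ₀ μ₁ : Measure X, IsProbabilityMeasure μ₀ → IsProbabilityMeasure μ₁ →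
      (∃ x₀ : X, ∫⁻ x, ENNReal.ofReal (dist x x₀ ^ 2) ∂μ₀ < ⊤) →
      (∃ x₀ : X, ∫⁻ x, ENNReal.ofReal (dist x x₀ ^ 2) ∂μ₁ < ⊤) →
      μ₀ ≪ m →
      ∀ π : Measure (X × X), IsProbabilityMeasure π →
        π.map Prod.fst = μ₀ → π.map Prod.snd = μ₁ →
        (∀ π' : Measure (X × X), IsProbabilityMeasure π' →
          π'.map Prod.fst = μ₀ → π'.map Prod.snd = μ₁ →
          ∫⁻ p, ENNReal.ofReal (dist p.1 p.2 ^ 2) ∂π ≤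
            ∫⁻ p, ENNReal.ofReal (dist p.1 p.2 ^ 2) ∂π') →
        ∃ T : X → X, Measurable T ∧ π {p : X × X | p.2 = T p.1} = 1) :
    m (Aplus φ) = 0 := by
  haveI := hproper
  have hne : (univ : Set X).Nonempty := by
    apply nonempty_of_measure_ne_zero (μ := m)
    rw [measure_univ]
    exact one_ne_zero
  obtain ⟨x₀, -⟩ := hne
  have hcov := aplus_covering hgeod hφ x₀
  have hnull : ∀ (t : ℚ) (δ : ℚ) (R : ℕ), m (Bset φ x₀ t δ R) = 0 := by
    intro t δ R
    by_cases hpos : 0 < t ∧ 0 < δ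
    · have he : Bset φ x₀ t δ R = Prod.fst '' Fset φ x₀ (t:ℝ) (δ:ℝ) (R:ℝ) := by
        ext x
        simp [Bset, hpos.1, hpos.2]
      rw [he]
      exact null_branch_config hproper m φ hφ H x₀ t δ R (by exact_mod_cast hpos.1)
        (by exact_mod_cast hpos.2)
    · have he : Bset φ x₀ t δ R = ∅ := by
        ext x
        simp only [Bset, mem_setOf_eq, mem_empty_iff_false, iff_false]
        tauto
      rw [he]
      exact measure_empty
  refine measure_mono_null hcov ?_
  exact measure_iUnion_null fun t => measure_iUnion_null fun δ =>
    measure_iUnion_null fun R => hnull t δ R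

theorem stmt8 [MetricSpace X] [MeasurableSpace X] [BorelSpace X]
    (hproper : ProperSpace X) (hgeod : GeodesicSpace X)
    (m : Measure X) [IsProbabilityMeasure m]
    (φ : X → ℝ) (hφ : LipschitzWith 1 φ)
    (H : ∀ μ₀ μ₁ : Measure X, IsProbabilityMeasure μ₀ → IsProbabilityMeasure μ₁ →
      (∃ x₀ : X, ∫⁻ x, ENNReal.ofReal (dist x x₀ ^ 2) ∂μ₀ < ⊤) →
      (∃ x₀ : X, ∫⁻ x, ENNReal.ofReal (dist x x₀ ^ 2) ∂μ₁ < ⊤) →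
      μ₀ ≪ m →
      ∀ π : Measure (X × X), IsProbabilityMeasure π →
        π.map Prod.fst = μ₀ → π.map Prod.snd = μ₁ →
        (∀ π' : Measure (X × X), IsProbabilityMeasure π' →
          π'.map Prod.fst = μ₀ → π'.map Prod.snd = μ₁ →
          ∫⁻ p, ENNReal.ofReal (dist p.1 p.2 ^ 2) ∂π ≤
            ∫⁻ p, ENNReal.ofReal (dist p.1 p.2 ^ 2) ∂π') →
        ∃ T : X → X, Measurable T ∧ π {p : X × X | p.2 = T p.1} = 1) :
    m (Aplus φ) = 0 ∧ m (Aminus φ) = 0 := by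
  constructor
  · exact stmt8' hproper hgeod m φ hφ H
  · rw [aminus_eq_aplus_neg]
    exact stmt8' hproper hgeod m (fun x => -φ x) hφ.neg H
end
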